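/- arXiv:2506.12151 — 2 statements merged into one kernel-verified Lean document; each statement's English description precedes it below -/
import Mathlib

section
/- Let k and ℓ be integers with k ≥ 2 and 3 ≤ ℓ ≤ 2k. Then for every finite simple graph T with at least one vertex, t(C_2, T)^{(2k−ℓ)/(ℓ−2)} · t(C_{2k}, T) ≥ t(C_ℓ, T)^{(2k−2)/(ℓ−2)}. -/
open SimpleGraph

/-- The homomorphism density `t(G,T)`. -/
noncomputable def homDensity {α β : Type*} [Fintype α] [Fintype β]
    (G : SimpleGraph α) (T : SimpleGraph β) : ℝ :=
  (Nat.card (G →g T) : ℝ) / (Fintype.card β : ℝ) ^ (Fintype.card α)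

section aux
set_option linter.unusedSectionVars false
open SimpleGraph Finset Matrix

variable {β : Type*} [Fintype β] [DecidableEq β]

/-- product along a path -/
noncomputable def pprod (A : Matrix β β ℝ) : (m : ℕ) → (Fin (m+1) → β) → ℝ :=
  fun m f => ∏ i : Fin m, A (f i.castSucc) (f i.succ)

lemma pprod_snoc (A : Matrix β β ℝ) (m : ℕ) (h : Fin (m+1) → β) (v : β) :
    pprod A (m+1) (Fin.snoc h v) = pprod A m h * A (h (Fin.last m)) v := by
  unfold pprod
  rw [Fin.prod_univ_castSucc]
  congr 1
  · exact Finset.prod_congr rfl fun i _ => by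
      rw [Fin.succ_castSucc, Fin.snoc_castSucc, Fin.snoc_castSucc]
  · rw [Fin.snoc_castSucc, Fin.succ_last, Fin.snoc_last]

lemma cons_snoc_last (m : ℕ) (u x : β) (g : Fin m → β) :
    (Fin.cons u (Fin.snoc g x) : Fin (m+2) → β) (Fin.last (m+1)) = x := by
  rw [← Fin.succ_last, Fin.cons_succ, Fin.snoc_last]

lemma pow_apply_eq (A : Matrix β β ℝ) : ∀ (m : ℕ) (u v : β),
    (A ^ (m+1)) u v = ∑ g : Fin m → β, pprod A (m+1) (Fin.cons u (Fin.snoc g v)) := by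
  intro m
  induction m with
  | zero =>
    intro u v
    rw [pow_one, Fintype.sum_subsingleton _ (default : Fin 0 → β)]
    rw [Fin.cons_snoc_eq_snoc_cons, pprod_snoc]
    simp [pprod]
  | succ m ih =>
    intro u v
    rw [pow_succ, Matrix.mul_apply]
    simp_rw [ih]
    rw [← (Fin.snocEquiv (fun _ : Fin (m+1) => β)).sum_comp, Fintype.sum_prod_type]
    apply Finset.sum_congr rfl; intro x _
    rw [Finset.sum_mul]
    apply Finset.sum_congr rfl; intro g _
    show pprod A (m + 1) (Fin.cons u (Fin.snoc g x)) * A x v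
      = pprod A (m + 1 + 1) (Fin.cons u (Fin.snoc (Fin.snoc g x) v))
    simp only [Fin.cons_snoc_eq_snoc_cons, pprod_snoc, Fin.snoc_last]

/-- cyclic product -/
noncomputable def cprod (A : Matrix β β ℝ) (m : ℕ) (f : Fin (m+1) → β) : ℝ :=
  ∏ i : Fin (m+1), A (f i) (f (i+1))

lemma cprod_eq_pprod (A : Matrix β β ℝ) (m : ℕ) (f : Fin (m+1) → β) :
    cprod A m f = pprod A (m+1) (Fin.snoc f (f 0)) := by
  unfold cprod pprod
  apply Finset.prod_congr rfl
  intro i _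
  rw [Fin.snoc_castSucc]
  congr 1
  rcases eq_or_ne i (Fin.last m) with rfl | hne
  · rw [Fin.succ_last, Fin.snoc_last, Fin.last_add_one]
  · obtain ⟨j, rfl⟩ := Fin.exists_castSucc_eq.mpr hne
    rw [Fin.succ_castSucc, Fin.snoc_castSucc, Fin.coeSucc_eq_succ]

lemma trace_pow_eq (A : Matrix β β ℝ) (m : ℕ) :
    Matrix.trace (A ^ (m+2)) = ∑ f : Fin (m+2) → β, cprod A (m+1) f := by
  rw [Matrix.trace]
  simp only [Matrix.diag]
  simp_rw [show (A ^ (m+2)) = A ^ ((m+1)+1) from rfl, pow_apply_eq]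
  rw [← (Fin.consEquiv (fun _ : Fin (m+2) => β)).sum_comp, Fintype.sum_prod_type]
  apply Finset.sum_congr rfl; intro v _
  apply Finset.sum_congr rfl; intro g _
  show pprod A (m + 2) (Fin.cons v (Fin.snoc g v))
      = cprod A (m+1) ((Fin.consEquiv (fun _ : Fin (m+2) => β)) (v, g))
  have h1 : (Fin.consEquiv (fun _ : Fin (m+2) => β)) (v, g) = Fin.cons v g := rfl
  rw [h1, cprod_eq_pprod, Fin.cons_zero, ← Fin.cons_snoc_eq_snoc_cons]

lemma cycle_adj_succ {m : ℕ} (i : Fin (m+2)) : (cycleGraph (m+2)).Adj i (i+1) := by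
  rw [cycleGraph_adj]
  right
  rw [add_sub_cancel_left]

noncomputable def homEquiv (m : ℕ) (T : SimpleGraph β) :
    (cycleGraph (m+2) →g T) ≃ {f : Fin (m+2) → β // ∀ i, T.Adj (f i) (f (i+1))} where
  toFun φ := ⟨φ, fun i => φ.map_adj (cycle_adj_succ i)⟩
  invFun f := ⟨f.1, by
    intro u v huv
    rw [cycleGraph_adj] at huv
    rcases huv with h | h
    · rw [sub_eq_iff_eq_add'] at h
      subst h
      exact (f.2 v).symm
    · rw [sub_eq_iff_eq_add'] at h
      subst h
      exact f.2 u⟩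
  left_inv φ := rfl
  right_inv f := rfl

lemma card_hom_eq (m : ℕ) (T : SimpleGraph β) [DecidableRel T.Adj] :
    (Nat.card (cycleGraph (m+2) →g T) : ℝ) = ∑ f : Fin (m+2) → β, cprod (T.adjMatrix ℝ) (m+1) f := by
  rw [Nat.card_congr (homEquiv m T), Nat.card_eq_fintype_card]
  unfold cprod
  simp_rw [adjMatrix_apply, Finset.prod_boole, Finset.mem_univ, forall_true_left]
  rw [Finset.sum_boole, Fintype.card_subtype]

lemma trace_pow_eq_sum_eigenvalues (A : Matrix β β ℝ) (hA : A.IsHermitian) (n : ℕ) :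
    Matrix.trace (A ^ n) = ∑ i, hA.eigenvalues i ^ n := by
  set U : Matrix β β ℝ := (Matrix.IsHermitian.eigenvectorUnitary hA : Matrix β β ℝ) with hU
  set D : Matrix β β ℝ := Matrix.diagonal (RCLike.ofReal ∘ hA.eigenvalues) with hD
  have hUU : star U * U = 1 := Matrix.mem_unitaryGroup_iff'.mp (Matrix.IsHermitian.eigenvectorUnitary hA).2
  have hUU' : U * star U = 1 := Matrix.mem_unitaryGroup_iff.mp (Matrix.IsHermitian.eigenvectorUnitary hA).2
  have key : ∀ n : ℕ, A ^ n = U * D ^ n * star U := by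
    intro n
    induction n with
    | zero => rw [pow_zero, pow_zero, mul_one, hUU']
    | succ n ih =>
      rw [pow_succ, ih]
      rw [Matrix.IsHermitian.spectral_theorem hA]
      calc U * D ^ n * star U * (U * D * star U)
          = U * D ^ n * (star U * U) * (D * star U) := by
            simp only [Matrix.mul_assoc]
        _ = U * D ^ (n+1) * star U := by
            rw [hUU, Matrix.mul_one, pow_succ]
            simp only [Matrix.mul_assoc]
  rw [key, Matrix.trace_mul_cycle, hUU, Matrix.one_mul,
    Matrix.diagonal_pow, Matrix.trace_diagonal]
  simp


lemma moment_ineq {ι : Type*} [Fintype ι] (μ : ι → ℝ) (k l : ℕ) (hk : 2 ≤ k) (hl : 3 ≤ l)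
    (hkl : l ≤ 2*k) :
    (∑ i, μ i ^ l) ^ (2*k - 2) ≤ (∑ i, μ i ^ 2) ^ (2*k - l) * (∑ i, μ i ^ (2*k)) ^ (l - 2) := by
  set SA : ℝ := ∑ i, |μ i| ^ l with hSAdef
  have hSA : 0 ≤ SA := Finset.sum_nonneg fun i _ => pow_nonneg (abs_nonneg _) _
  have heven : Even (2*k-2) := ⟨k-1, by omega⟩
  have habs : |∑ i, μ i ^ l| ≤ SA := by
    refine (Finset.abs_sum_le_sum_abs _ _).trans (le_of_eq ?_)
    exact Finset.sum_congr rfl fun i _ => (pow_abs _ _).symm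
  have h1 : (∑ i, μ i ^ l) ^ (2*k-2) ≤ SA ^ (2*k-2) := by
    rw [← heven.pow_abs]
    exact pow_le_pow_left₀ (abs_nonneg _) habs _
  refine h1.trans ?_
  have hS2 : (0:ℝ) ≤ ∑ i, μ i ^ 2 := Finset.sum_nonneg fun i _ => sq_nonneg _
  have hS2k : (0:ℝ) ≤ ∑ i, μ i ^ (2*k) := Finset.sum_nonneg fun i _ => (even_two_mul k).pow_nonneg _
  rcases eq_or_lt_of_le hkl with rfl | hlt
  · rw [Nat.sub_self, pow_zero, one_mul]
    apply le_of_eq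
    congr 1
    exact Finset.sum_congr rfl fun i _ => (even_two_mul k).pow_abs _
  · -- Hölder
    have hk2 : (0:ℝ) < 2*(k:ℝ) - 2 := by
      have : (2:ℝ) ≤ (k:ℝ) := by exact_mod_cast hk
      linarith
    have hlR : (2:ℝ) < (l:ℝ) := by exact_mod_cast hl.trans_lt' (by norm_num)
    have hltR : (l:ℝ) < 2*(k:ℝ) := by exact_mod_cast hlt
    have hkpos : (0:ℝ) < (k:ℝ) := by exact_mod_cast (by omega : 0 < k)
    have hne1 : 2*(k:ℝ) - 2 ≠ 0 := hk2.ne'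
    have hne2 : 2*(k:ℝ) - (l:ℝ) ≠ 0 := by linarith
    have hne3 : (l:ℝ) - 2 ≠ 0 := by linarith
    set p : ℝ := (2*(k:ℝ) - 2)/(2*(k:ℝ) - l) with hp
    set q : ℝ := (2*(k:ℝ) - 2)/((l:ℝ) - 2) with hq
    have hppos : 0 < p := div_pos hk2 (by linarith)
    have hqpos : 0 < q := div_pos hk2 (by linarith)
    have hpq : p.HolderConjugate q := by
      rw [Real.holderConjugate_iff]
      constructor
      · rw [hp, lt_div_iff₀ (by linarith)]
        linarith
      · rw [hp, hq]
        field_simp [show (k:ℝ) - 1 ≠ 0 by linarith]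
        ring
    have key := Real.inner_le_Lp_mul_Lq_of_nonneg (s := Finset.univ)
      (f := fun i => |μ i| ^ (2/p)) (g := fun i => |μ i| ^ (2*(k:ℝ)/q)) hpq
      (fun i _ => Real.rpow_nonneg (abs_nonneg _) _)
      (fun i _ => Real.rpow_nonneg (abs_nonneg _) _)
    have hab : ∀ i : ι, |μ i| ^ (2/p) * |μ i| ^ (2*(k:ℝ)/q) = |μ i| ^ l := by
      intro i
      rw [← Real.rpow_add' (abs_nonneg _)
        (add_pos (div_pos two_pos hppos) (div_pos (mul_pos two_pos hkpos) hqpos)).ne']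
      rw [show 2/p + 2*(k:ℝ)/q = ((l:ℕ):ℝ) by rw [hp, hq]; field_simp [show (k:ℝ) - 1 ≠ 0 by linarith]; ring, Real.rpow_natCast]
    have hap : ∀ i : ι, (|μ i| ^ (2/p)) ^ p = μ i ^ 2 := by
      intro i
      rw [← Real.rpow_mul (abs_nonneg _), div_mul_cancel₀ _ hppos.ne', Real.rpow_two, sq_abs]
    have hbq : ∀ i : ι, (|μ i| ^ (2*(k:ℝ)/q)) ^ q = μ i ^ (2*k) := by
      intro i
      rw [← Real.rpow_mul (abs_nonneg _), div_mul_cancel₀ _ hqpos.ne',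
        show (2*(k:ℝ)) = ((2*k:ℕ):ℝ) by push_cast; ring, Real.rpow_natCast,
        (even_two_mul k).pow_abs]
    simp only [hab, hap, hbq] at key
    have h2 : SA ^ (2*k-2) ≤ ((∑ i, μ i ^ 2) ^ (1/p) * (∑ i, μ i ^ (2*k)) ^ (1/q)) ^ (2*k-2) :=
      pow_le_pow_left₀ hSA key _
    refine h2.trans (le_of_eq ?_)
    have f1 : ((∑ i, μ i ^ 2) ^ (1/p)) ^ (2*k-2) = (∑ i, μ i ^ 2) ^ (2*k-l) := by
      rw [← Real.rpow_natCast ((∑ i, μ i ^ 2) ^ (1/p)) (2*k-2), ← Real.rpow_mul hS2,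
        show 1/p * ((2*k-2 : ℕ):ℝ) = ((2*k-l : ℕ):ℝ) by
          rw [hp]; push_cast [Nat.cast_sub hkl, Nat.cast_sub (show 2 ≤ 2*k by omega)]
          field_simp [show (k:ℝ) - 1 ≠ 0 by linarith],
        Real.rpow_natCast]
    have f2 : ((∑ i, μ i ^ (2*k)) ^ (1/q)) ^ (2*k-2) = (∑ i, μ i ^ (2*k)) ^ (l-2) := by
      rw [← Real.rpow_natCast ((∑ i, μ i ^ (2*k)) ^ (1/q)) (2*k-2), ← Real.rpow_mul hS2k,
        show 1/q * ((2*k-2 : ℕ):ℝ) = ((l-2 : ℕ):ℝ) by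
          rw [hq]; push_cast [Nat.cast_sub (show 2 ≤ l by omega), Nat.cast_sub (show 2 ≤ 2*k by omega)]
          field_simp [show (k:ℝ) - 1 ≠ 0 by linarith],
        Real.rpow_natCast]
    rw [mul_pow, f1, f2]

end aux

open Finset Matrix in
theorem stmt_9 (k l : ℕ) (hk : 2 ≤ k) (hl : 3 ≤ l) (hkl : l ≤ 2*k)
    {β : Type*} [Fintype β] [Nonempty β] (T : SimpleGraph β) :
    homDensity (cycleGraph l) T ^ ((2*(k:ℝ) - 2) / ((l:ℝ) - 2)) ≤
      homDensity (cycleGraph 2) T ^ ((2*(k:ℝ) - (l:ℝ)) / ((l:ℝ) - 2)) *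
        homDensity (cycleGraph (2*k)) T := by
  classical
  set A : Matrix β β ℝ := T.adjMatrix ℝ with hAdef
  have hA : A.IsHermitian := by
    rw [Matrix.IsHermitian]
    ext i j
    simp [Matrix.conjTranspose_apply, hAdef, SimpleGraph.adjMatrix_apply, SimpleGraph.adj_comm]
  set μ : β → ℝ := hA.eigenvalues with hμ
  set N : ℝ := (Fintype.card β : ℝ) with hNdef
  have hN : 0 < N := by
    rw [hNdef]
    exact_mod_cast Fintype.card_pos
  have hcard : ∀ m : ℕ, (Nat.card (cycleGraph (m+2) →g T) : ℝ) = ∑ i, μ i ^ (m+2) := by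
    intro m
    rw [card_hom_eq, ← trace_pow_eq, trace_pow_eq_sum_eigenvalues A hA]
  have hdens : ∀ m : ℕ, 2 ≤ m → homDensity (cycleGraph m) T = (∑ i, μ i ^ m) / N ^ m := by
    intro m hm
    obtain ⟨m', rfl⟩ : ∃ m', m = m' + 2 := ⟨m - 2, by omega⟩
    rw [homDensity, Fintype.card_fin, hcard]
  have hD : ∀ m : ℕ, 0 ≤ homDensity (cycleGraph m) T := by
    intro m
    exact div_nonneg (Nat.cast_nonneg _) (pow_nonneg (Nat.cast_nonneg _) _)
  -- reduce the rpow inequality to a ℕ-power inequality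
  have hlR : (2:ℝ) < (l:ℝ) := by exact_mod_cast (by omega : 2 < l)
  have he : (0:ℝ) < (l:ℝ) - 2 := by linarith
  have core : homDensity (cycleGraph l) T ^ (2*k-2) ≤
      homDensity (cycleGraph 2) T ^ (2*k-l) * homDensity (cycleGraph (2*k)) T ^ (l-2) := by
    rw [hdens l (by omega), hdens 2 le_rfl, hdens (2*k) (by omega)]
    rw [div_pow, div_pow, div_pow, div_mul_div_comm, ← pow_mul, ← pow_mul, ← pow_mul, ← pow_add]
    rw [show 2*(2*k-l) + 2*k*(l-2) = l*(2*k-2) by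
      zify [hkl, (by omega : 2 ≤ l), (by omega : 2 ≤ 2*k)]; ring]
    apply div_le_div_of_nonneg_right ?_ (by positivity)
    · exact moment_ineq μ k l hk hl hkl
  -- now convert
  have hX := hD l
  have hY := hD 2
  have hZ := hD (2*k)
  rw [← Real.rpow_le_rpow_iff (Real.rpow_nonneg hX _)
    (mul_nonneg (Real.rpow_nonneg hY _) hZ) he]
  rw [← Real.rpow_natCast (homDensity (cycleGraph l) T) (2*k-2)] at core
  rw [← Real.rpow_natCast (homDensity (cycleGraph 2) T) (2*k-l)] at core
  rw [← Real.rpow_natCast (homDensity (cycleGraph (2*k)) T) (l-2)] at core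
  rw [← Real.rpow_mul hX, div_mul_cancel₀ _ he.ne']
  rw [Real.mul_rpow (Real.rpow_nonneg hY _) hZ, ← Real.rpow_mul hY,
    div_mul_cancel₀ _ he.ne']
  calc homDensity (cycleGraph l) T ^ (2*(k:ℝ) - 2)
      = homDensity (cycleGraph l) T ^ (((2*k-2 : ℕ)):ℝ) := by
        congr 1
        push_cast [Nat.cast_sub (by omega : 2 ≤ 2*k)]
        ring
    _ ≤ homDensity (cycleGraph 2) T ^ (((2*k-l : ℕ)):ℝ) *
        homDensity (cycleGraph (2*k)) T ^ (((l-2 : ℕ)):ℝ) := core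
    _ = homDensity (cycleGraph 2) T ^ (2*(k:ℝ) - l) *
        homDensity (cycleGraph (2*k)) T ^ ((l:ℝ) - 2) := by
        congr 2 <;> push_cast [Nat.cast_sub hkl, Nat.cast_sub (by omega : 2 ≤ l)] <;> ring
end

section
/- (Tensor trick.) Let H_1 and H_2 be finite simple graphs, let c ≥ 0 be a real number, and let A, B > 0 be real constants. Suppose that for every finite simple graph T with at least one vertex, t(H_1, T) · A · (log v(T) + 2)^B ≥ t(H_2, T)^c. Then in fact t(H_1, T) ≥ t(H_2, T)^c for every finite simple graph T with at least one vertex. -/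
open SimpleGraph

/-- Tensor (categorical) product of graphs. -/
def tensorG {α β : Type*} (G : SimpleGraph α) (H : SimpleGraph β) :
    SimpleGraph (α × β) where
  Adj p q := G.Adj p.1 q.1 ∧ H.Adj p.2 q.2
  symm := by constructor; rintro p q ⟨h1, h2⟩; exact ⟨h1.symm, h2.symm⟩
  loopless := by constructor; rintro p ⟨h1, _⟩; exact G.irrefl h1

def homTensorEquiv {γ α β : Type*} (K : SimpleGraph γ) (G : SimpleGraph α)
    (H : SimpleGraph β) : (K →g tensorG G H) ≃ (K →g G) × (K →g H) where
  toFun f := (⟨fun v => (f v).1, fun h => (f.map_rel' h).1⟩,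
              ⟨fun v => (f v).2, fun h => (f.map_rel' h).2⟩)
  invFun p := ⟨fun v => (p.1 v, p.2 v), fun h => ⟨p.1.map_rel' h, p.2.map_rel' h⟩⟩
  left_inv f := rfl
  right_inv p := rfl

lemma homDensity_tensor {γ α β : Type*} [Fintype γ] [Fintype α] [Fintype β]
    (K : SimpleGraph γ) (G : SimpleGraph α) (H : SimpleGraph β) :
    homDensity K (tensorG G H) = homDensity K G * homDensity K H := by
  unfold homDensity
  rw [Nat.card_congr (homTensorEquiv K G H), Nat.card_prod, Fintype.card_prod]
  push_cast
  rw [mul_pow, div_mul_div_comm]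

def homComapEquiv {α β γ : Type*} (K : SimpleGraph α) (T : SimpleGraph γ)
    (e : β ≃ γ) : (K →g T.comap e) ≃ (K →g T) where
  toFun f := ⟨fun v => e (f v), fun h => f.map_rel' h⟩
  invFun g := ⟨fun v => e.symm (g v), fun h => by
    show T.Adj (e (e.symm _)) (e (e.symm _))
    simpa using g.map_rel' h⟩
  left_inv f := by ext v; exact e.symm_apply_apply _
  right_inv g := by ext v; exact e.apply_symm_apply _

lemma homDensity_comap {α β γ : Type*} [Fintype α] [Fintype β] [Fintype γ]
    (K : SimpleGraph α) (T : SimpleGraph γ) (e : β ≃ γ) :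
    homDensity K (T.comap ⇑e) = homDensity K T := by
  unfold homDensity
  rw [Nat.card_congr (homComapEquiv K T e), Fintype.card_congr e]

lemma homDensity_nonneg {α β : Type*} [Fintype α] [Fintype β]
    (G : SimpleGraph α) (T : SimpleGraph β) : 0 ≤ homDensity G T :=
  div_nonneg (Nat.cast_nonneg _) (by positivity)

lemma exists_tensor_pow {n : ℕ} (T : SimpleGraph (Fin n))
    {α₁ α₂ : Type*} [Fintype α₁] [Fintype α₂]
    (H₁ : SimpleGraph α₁) (H₂ : SimpleGraph α₂) (k : ℕ) :
    ∃ T' : SimpleGraph (Fin (n ^ (k + 1))),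
      homDensity H₁ T' = homDensity H₁ T ^ (k + 1) ∧
      homDensity H₂ T' = homDensity H₂ T ^ (k + 1) := by
  induction k with
  | zero =>
    exact ⟨T.comap (finCongr (pow_one n)), by rw [homDensity_comap, pow_one],
      by rw [homDensity_comap, pow_one]⟩
  | succ k ih =>
    obtain ⟨T', h1, h2⟩ := ih
    refine ⟨(tensorG T' T).comap
      ((finCongr (pow_succ n (k + 1))).trans finProdFinEquiv.symm), ?_, ?_⟩ <;>
      rw [homDensity_comap, homDensity_tensor]
    · rw [h1, ← pow_succ]
    · rw [h2, ← pow_succ]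

open Filter Real in
lemma tendsto_aux (A B L : ℝ) (hA : 0 < A) (hB : 0 < B) (hL : 0 ≤ L) :
    Tendsto (fun k : ℕ =>
      (Real.log A + B * Real.log ((k + 1 : ℝ) * L + 2)) / (k + 1 : ℝ))
      atTop (nhds 0) := by
  have hk : ∀ k : ℕ, (0:ℝ) < (k + 1 : ℝ) := fun k => by positivity
  have hpos : ∀ k : ℕ, (0:ℝ) < (k + 1 : ℝ) * L + 2 := fun k => by positivity
  have hnat : Tendsto (fun k : ℕ => (k + 1 : ℝ)) atTop atTop :=
    tendsto_atTop_add_const_right _ 1 tendsto_natCast_atTop_atTop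
  -- lower bound tends to 0
  have hlow : Tendsto (fun k : ℕ => (Real.log A + B * Real.log 2) / (k + 1 : ℝ))
      atTop (nhds 0) := tendsto_const_nhds.div_atTop hnat
  -- log x / x → 0
  have hlog : Tendsto (fun x : ℝ => Real.log x / x) atTop (nhds 0) :=
    Real.isLittleO_log_id_atTop.tendsto_div_nhds_zero
  have hup : Tendsto (fun k : ℕ =>
      (Real.log A + B * Real.log (L + 2)) / (k + 1 : ℝ)
        + B * (Real.log (k + 1 : ℝ) / (k + 1 : ℝ))) atTop (nhds 0) := by
    have h1 : Tendsto (fun k : ℕ => (Real.log A + B * Real.log (L + 2)) / (k + 1 : ℝ))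
        atTop (nhds 0) := tendsto_const_nhds.div_atTop hnat
    have h2 : Tendsto (fun k : ℕ => Real.log (k + 1 : ℝ) / (k + 1 : ℝ))
        atTop (nhds 0) := hlog.comp hnat
    simpa using h1.add (h2.const_mul B)
  refine tendsto_of_tendsto_of_tendsto_of_le_of_le hlow hup ?_ ?_
  · intro k
    apply (div_le_div_iff_of_pos_right (hk k)).mpr
    have : Real.log 2 ≤ Real.log ((k + 1 : ℝ) * L + 2) :=
      Real.log_le_log (by norm_num) (by nlinarith [hk k])
    nlinarith
  · intro k
    have hle : Real.log ((k + 1 : ℝ) * L + 2) ≤ Real.log (L + 2) + Real.log (k + 1 : ℝ) := by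
      rw [← Real.log_mul (by positivity) (ne_of_gt (hk k))]
      apply Real.log_le_log (hpos k)
      nlinarith [hk k, (hk k).le]
    calc (Real.log A + B * Real.log ((k + 1 : ℝ) * L + 2)) / (k + 1 : ℝ)
        ≤ (Real.log A + B * Real.log (L + 2) + B * Real.log (k + 1 : ℝ)) / (k + 1 : ℝ) := by
          apply (div_le_div_iff_of_pos_right (hk k)).mpr; nlinarith
      _ = (Real.log A + B * Real.log (L + 2)) / (k + 1 : ℝ)
            + B * (Real.log (k + 1 : ℝ) / (k + 1 : ℝ)) := by ring

theorem stmt_10 {α₁ α₂ : Type*} [Fintype α₁] [Fintype α₂]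
    (H₁ : SimpleGraph α₁) (H₂ : SimpleGraph α₂) (c A B : ℝ)
    (hc : 0 ≤ c) (hA : 0 < A) (hB : 0 < B)
    (h : ∀ (n : ℕ), 0 < n → ∀ T : SimpleGraph (Fin n),
      homDensity H₂ T ^ c ≤
        homDensity H₁ T * A * (Real.log (n : ℝ) + 2) ^ B) :
    ∀ (n : ℕ), 0 < n → ∀ T : SimpleGraph (Fin n),
      homDensity H₂ T ^ c ≤ homDensity H₁ T := by
  intro n hn T
  set d1 := homDensity H₁ T with hd1
  set d2 := homDensity H₂ T with hd2
  have hd1n : 0 ≤ d1 := homDensity_nonneg _ _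
  have hd2n : 0 ≤ d2 := homDensity_nonneg _ _
  set x := d2 ^ c with hx
  have hxn : 0 ≤ x := Real.rpow_nonneg hd2n c
  set L := Real.log n with hL
  have hLn : 0 ≤ L := Real.log_natCast_nonneg n
  set C : ℕ → ℝ := fun k => A * ((k + 1 : ℝ) * L + 2) ^ B with hC
  have hCpos : ∀ k, 0 < C k := fun k => by
    apply mul_pos hA
    apply Real.rpow_pos_of_pos
    positivity
  -- key inequality for each k
  have key : ∀ k : ℕ, x ≤ d1 * (C k) ^ ((k + 1 : ℝ)⁻¹) := by
    intro k
    obtain ⟨T', h1, h2⟩ := exists_tensor_pow T H₁ H₂ k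
    have hnp : 0 < n ^ (k + 1) := by positivity
    have := h (n ^ (k + 1)) hnp T'
    rw [h1, h2] at this
    have hlog : Real.log ((n ^ (k + 1) : ℕ) : ℝ) = (k + 1 : ℝ) * L := by
      push_cast
      rw [Real.log_pow]
      push_cast
      ring
    rw [hlog] at this
    have hstep : x ^ (k + 1) ≤ d1 ^ (k + 1) * C k := by
      calc x ^ (k + 1) = (d2 ^ (k + 1) : ℝ) ^ c := by
            rw [hx, ← Real.rpow_natCast d2 (k+1), ← Real.rpow_natCast (d2 ^ c) (k+1),
              ← Real.rpow_mul hd2n, ← Real.rpow_mul hd2n, mul_comm]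
        _ ≤ d1 ^ (k + 1) * A * ((k + 1 : ℝ) * L + 2) ^ B := this
        _ = d1 ^ (k + 1) * C k := by rw [hC]; ring
    have hkpos : (0:ℝ) < (k + 1 : ℝ) := by positivity
    have := Real.rpow_le_rpow (by positivity) hstep (by positivity : (0:ℝ) ≤ (k + 1 : ℝ)⁻¹)
    calc x = (x ^ (k + 1) : ℝ) ^ ((k + 1 : ℝ)⁻¹) := by
          rw [← Real.rpow_natCast x (k + 1), ← Real.rpow_mul hxn]
          push_cast
          rw [mul_inv_cancel₀ (ne_of_gt hkpos), Real.rpow_one]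
      _ ≤ (d1 ^ (k + 1) * C k) ^ ((k + 1 : ℝ)⁻¹) := this
      _ = d1 * (C k) ^ ((k + 1 : ℝ)⁻¹) := by
          rw [Real.mul_rpow (by positivity) (hCpos k).le,
            ← Real.rpow_natCast d1 (k + 1), ← Real.rpow_mul hd1n]
          push_cast
          rw [mul_inv_cancel₀ (ne_of_gt hkpos), Real.rpow_one]
  -- the right-hand side tends to d1
  have hCe : ∀ k : ℕ, (C k) ^ ((k + 1 : ℝ)⁻¹) =
      Real.exp ((Real.log A + B * Real.log ((k + 1 : ℝ) * L + 2)) / (k + 1 : ℝ)) := by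
    intro k
    have hb : (0:ℝ) < (k + 1 : ℝ) * L + 2 := by positivity
    rw [Real.rpow_def_of_pos (hCpos k), hC]
    rw [Real.log_mul (ne_of_gt hA) (ne_of_gt (Real.rpow_pos_of_pos hb B)),
      Real.log_rpow hb, div_eq_mul_inv]
  have htend : Filter.Tendsto (fun k : ℕ => d1 * (C k) ^ ((k + 1 : ℝ)⁻¹))
      Filter.atTop (nhds d1) := by
    have h0 := tendsto_aux A B L hA hB hLn
    have h1 : Filter.Tendsto (fun k : ℕ => (C k) ^ ((k + 1 : ℝ)⁻¹))
        Filter.atTop (nhds 1) := by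
      simp only [hCe]
      have := (Real.continuous_exp.tendsto 0).comp h0
      simpa [Function.comp_def] using this
    simpa using (tendsto_const_nhds (x := d1)).mul h1
  exact ge_of_tendsto' htend key
end
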